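/- arXiv:1604.07893 — 2 statements merged into one kernel-verified Lean document; each statement's English description precedes it below -/
import Mathlib

section
/- Let a1 = 5(31+√93)/496, a2 = (3+√93)/8, a3 = 1/2, b1 = -5(√93-31)/496, b2 = (3-√93)/8, μ = 3/8, ψ = 321/1984. Then for any square matrix R, I + R^2 + R^4 + R^6 + R^8 + R^10 + R^12 + R^14 + R^16 = (I + a1·R^2 + a2·R^4 + a3·R^6 + R^8)(I + b1·R^2 + b2·R^4 + a3·R^6 + R^8) + μ·R^2 + ψ·R^4. -/
/-- Factorization of `I + R² + R⁴ + ⋯ + R¹⁶` into two degree-8 factors plus a correction. -/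
theorem hyperpower18_degree16_factorization {n : ℕ} (R : Matrix (Fin n) (Fin n) ℝ)
    (a1 a2 a3 b1 b2 μ ψ : ℝ)
    (ha1 : a1 = 5 * (31 + Real.sqrt 93) / 496)
    (ha2 : a2 = (3 + Real.sqrt 93) / 8)
    (ha3 : a3 = 1 / 2)
    (hb1 : b1 = -5 * (Real.sqrt 93 - 31) / 496)
    (hb2 : b2 = (3 - Real.sqrt 93) / 8)
    (hμ : μ = 3 / 8)
    (hψ : ψ = 321 / 1984) :
    ∑ i ∈ Finset.range 9, R ^ (2 * i) =
      (1 + a1 • R ^ 2 + a2 • R ^ 4 + a3 • R ^ 6 + R ^ 8) *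
        (1 + b1 • R ^ 2 + b2 • R ^ 4 + a3 • R ^ 6 + R ^ 8) +
      μ • R ^ 2 + ψ • R ^ 4 := by
  have hs : Real.sqrt 93 ^ 2 = 93 := Real.sq_sqrt (by norm_num)
  subst ha1 ha2 ha3 hb1 hb2 hμ hψ
  simp only [Finset.sum_range_succ, Finset.sum_range_zero, zero_add]
  norm_num
  simp only [mul_add, add_mul, smul_mul_assoc, mul_smul_comm, smul_smul, one_mul, mul_one,
    ← pow_add]
  norm_num
  match_scalars <;> nlinarith [hs, Real.sqrt_nonneg 93]
end

section
/- Let a1 = 5(31+√93)/496, a2 = (3+√93)/8, a3 = 1/2, c1 = (1+√(27-2√93))/4, c2 = (1-√(27-2√93))/4, c3 = (5√93-93)/496. Then the real polynomial identity 1 + a1·x^2 + a2·x^4 + a3·x^6 + x^8 = (1 + c1·x^2 + x^4)(1 + c2·x^2 + x^4) + c3·x^2 holds for all real x. -/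
/-- The real polynomial identity
`1 + a1·x² + a2·x⁴ + a3·x⁶ + x⁸ = (1 + c1·x² + x⁴)(1 + c2·x² + x⁴) + c3·x²`. -/
theorem degree8_factorization_first (a1 a2 a3 c1 c2 c3 : ℝ)
    (ha1 : a1 = 5 * (31 + Real.sqrt 93) / 496)
    (ha2 : a2 = (3 + Real.sqrt 93) / 8)
    (ha3 : a3 = 1 / 2)
    (hc1 : c1 = (1 + Real.sqrt (27 - 2 * Real.sqrt 93)) / 4)
    (hc2 : c2 = (1 - Real.sqrt (27 - 2 * Real.sqrt 93)) / 4)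
    (hc3 : c3 = (5 * Real.sqrt 93 - 93) / 496) :
    ∀ x : ℝ, 1 + a1 * x ^ 2 + a2 * x ^ 4 + a3 * x ^ 6 + x ^ 8 =
      (1 + c1 * x ^ 2 + x ^ 4) * (1 + c2 * x ^ 2 + x ^ 4) + c3 * x ^ 2 := by
  intro x
  have hs : Real.sqrt 93 ^ 2 = 93 := Real.sq_sqrt (by norm_num)
  have h93 : Real.sqrt 93 ≤ 10 := by
    nlinarith [Real.sqrt_nonneg 93, hs]
  have ht : Real.sqrt (27 - 2 * Real.sqrt 93) ^ 2 = 27 - 2 * Real.sqrt 93 :=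
    Real.sq_sqrt (by nlinarith)
  subst ha1 ha2 ha3 hc1 hc2 hc3
  linear_combination (x ^ 4 / 16) * ht
end
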